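/- Let G be a finite simple graph and s, t two distinct vertices. There exist two internally vertex-disjoint s–t paths in G if and only if for every vertex v ∉ {s,t}, the graph G − v (obtained by deleting v) still contains an s–t path, and G contains an s–t path. -/

import Mathlib

/-!
Induct along an `s`–`t` path whose last edge is `w t`. The hypothesis passes from `(s, t)`
to `(s, w)`, so there are internally disjoint `s`–`w` paths `P₁`, `P₂`. Take an `s`–`t` walk
avoiding `w` and let `x` be the last vertex it shares with `P₁ ∪ P₂`, say `x ∈ P₁`. Then `P₁`
up to `x` followed by the rest of that walk, and `P₂` followed by the edge `w t`, are
internally disjoint.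
-/

namespace SimpleGraph.Walk

variable {V : Type*} {G : SimpleGraph V}

def InternallyDisjoint {s t : V} (p q : G.Walk s t) : Prop :=
  ∀ v ∈ p.support, v ∈ q.support → v = s ∨ v = t

namespace InternallyDisjoint

variable {s t : V} {p q : G.Walk s t}

lemma symm (h : p.InternallyDisjoint q) : q.InternallyDisjoint p :=
  fun v hq hp => h v hp hq

lemma notMem_or_notMem (h : p.InternallyDisjoint q) {v : V} (hs : v ≠ s) (ht : v ≠ t) :
    v ∉ p.support ∨ v ∉ q.support := by
  by_contra! hv
  rcases h v hv.1 hv.2 with rfl | rfl <;> contradiction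

lemma exists_isPath (h : p.InternallyDisjoint q) :
    ∃ p' q' : G.Walk s t, p'.IsPath ∧ q'.IsPath ∧ p'.InternallyDisjoint q' := by
  classical
  exact ⟨p.bypass, q.bypass, bypass_isPath p, bypass_isPath q, fun v hp hq =>
    h v (support_bypass_subset_support p hp) (support_bypass_subset_support q hq)⟩

lemma append_concat [DecidableEq V] {w x : V} {P₁ P₂ : G.Walk s w}
    (hP : P₁.InternallyDisjoint P₂) (hP₁ : P₁.IsPath) (hx : x ∈ P₁.support) (r : G.Walk x t)
    (hwr : w ∉ r.support) (hr : ∀ y ∈ r.support.tail, y ∉ P₂.support) (hwt : G.Adj w t) :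
    ((P₁.takeUntil x hx).append r).InternallyDisjoint (P₂.concat hwt) := by
  have hxw : x ≠ w := fun h => hwr (h ▸ r.start_mem_support)
  have hwP₁ : w ∉ (P₁.takeUntil x hx).support :=
    endpoint_notMem_support_takeUntil hP₁ hx hxw.symm
  intro v hv₁ hv₂
  rw [support_concat, List.mem_append, List.mem_singleton] at hv₂
  rcases hv₂ with hv₂ | rfl
  · rw [mem_support_append_iff] at hv₁
    rcases hv₁ with hv₁ | hv₁
    · rcases hP v (support_takeUntil_subset_support _ _ hv₁) hv₂ with hvs | rfl
      · exact Or.inl hvs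
      · exact absurd hv₁ hwP₁
    · rw [← cons_tail_support, List.mem_cons] at hv₁
      rcases hv₁ with rfl | hv₁
      · exact (hP v hx hv₂).imp id fun hvw => absurd hvw hxw
      · exact absurd hv₂ (hr v hv₁)
  · exact Or.inr rfl

end InternallyDisjoint

lemma exists_walk_from_last_mem {u t : V} (S : Set V) (Q : G.Walk u t)
    (hQ : ∃ y ∈ Q.support, y ∈ S) :
    ∃ x ∈ S, ∃ r : G.Walk x t,
      r.support ⊆ Q.support ∧ ∀ y ∈ r.support.tail, y ∉ S := by
  induction Q with
  | nil =>
    obtain ⟨y, hy, hyS⟩ := hQ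
    rw [support_nil, List.mem_singleton] at hy
    exact ⟨_, hy ▸ hyS, nil, List.Subset.refl _, by simp⟩
  | @cons u a t hua q ih =>
    by_cases hq : ∃ y ∈ q.support, y ∈ S
    · obtain ⟨x, hx, r, hrq, hr⟩ := ih hq
      exact ⟨x, hx, r, List.Subset.trans hrq (support_subset_support_cons q hua), hr⟩
    · push Not at hq
      obtain ⟨y, hy, hyS⟩ := hQ
      have hyu : y = u := by
        rw [support_cons, List.mem_cons] at hy
        exact hy.resolve_right fun hyq => hq y hyq hyS
      exact ⟨u, hyu ▸ hyS, cons hua q, List.Subset.refl _, by simpa using hq⟩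

theorem IsPath.exists_internallyDisjoint_isPath {s t : V} {p : G.Walk s t} (hp : p.IsPath)
    (h : ∀ v, v ≠ s → v ≠ t → ∃ q : G.Walk s t, v ∉ q.support) :
    ∃ p₁ p₂ : G.Walk s t, p₁.IsPath ∧ p₂.IsPath ∧ p₁.InternallyDisjoint p₂ := by
  classical
  induction p using concatRec with
  | Hnil => exact ⟨Walk.nil, Walk.nil, .nil, .nil, fun v hv _ => Or.inl (by simpa using hv)⟩
  | @Hconcat s w t q hwt ih =>
    obtain ⟨hq, htq⟩ := (concat_isPath_iff hwt).mp hp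
    by_cases hws : w = s
    · subst hws
      exact ⟨hwt.toWalk, hwt.toWalk, hwt.isPath_toWalk, hwt.isPath_toWalk,
        fun v hv _ => by simpa using hv⟩
    have h' : ∀ v, v ≠ s → v ≠ w → ∃ q : G.Walk s w, v ∉ q.support := by
      intro v hvs hvw
      by_cases hvt : v = t
      · exact ⟨q, hvt ▸ htq⟩
      · obtain ⟨r, hvr⟩ := h v hvs hvt
        exact ⟨r.concat hwt.symm, by simp [support_concat, hvr, hvw]⟩
    obtain ⟨P₁, P₂, hP₁, hP₂, hP⟩ := ih hq h'
    obtain ⟨Q, hwQ⟩ := h w hws hwt.ne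
    obtain ⟨x, hx, r, hrQ, hr⟩ :=
      Q.exists_walk_from_last_mem {y | y ∈ P₁.support ∨ y ∈ P₂.support}
        ⟨s, Q.start_mem_support, Or.inl P₁.start_mem_support⟩
    have hwr : w ∉ r.support := fun hw => hwQ (hrQ hw)
    rcases hx with hx | hx
    · exact (hP.append_concat hP₁ hx r hwr (fun y hy => (hr y hy <| Or.inr ·)) hwt).exists_isPath
    · exact (hP.symm.append_concat hP₂ hx r hwr (fun y hy => (hr y hy <| Or.inl ·))
        hwt).exists_isPath

end SimpleGraph.Walk

theorem menger_two_disjoint_paths_general {V : Type*}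
    (G : SimpleGraph V) (s t : V) :
    (∃ p q : G.Walk s t, p.IsPath ∧ q.IsPath ∧
        ∀ v, v ∈ p.support → v ∈ q.support → v = s ∨ v = t) ↔
    (G.Reachable s t ∧
      ∀ v, v ≠ s → v ≠ t → ∃ p : G.Walk s t, p.IsPath ∧ v ∉ p.support) := by
  constructor
  · rintro ⟨p, q, hp, hq, hpq⟩
    refine ⟨⟨p⟩, fun v hs ht => ?_⟩
    rcases SimpleGraph.Walk.InternallyDisjoint.notMem_or_notMem hpq hs ht with hv | hv
    exacts [⟨p, hp, hv⟩, ⟨q, hq, hv⟩]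
  · rintro ⟨hst, h⟩
    obtain ⟨p, hp⟩ := hst.exists_isPath
    exact hp.exists_internallyDisjoint_isPath fun v hs ht => (h v hs ht).imp fun _ => And.right

theorem menger_two_disjoint_paths {V : Type*} [Fintype V]
    (G : SimpleGraph V) (s t : V) (hst : s ≠ t) :
    (∃ p q : G.Walk s t, p.IsPath ∧ q.IsPath ∧
        ∀ v, v ∈ p.support → v ∈ q.support → v = s ∨ v = t) ↔
    (G.Reachable s t ∧
      ∀ v, v ≠ s → v ≠ t → ∃ p : G.Walk s t, p.IsPath ∧ v ∉ p.support) :=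
  menger_two_disjoint_paths_general G s t
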